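/- arXiv:math/0311339 — 3 statements merged into one kernel-verified Lean document; each statement's English description precedes it below -/
import Mathlib

section
/- For every k ≥ 0, h maps n̄^k M into n̄^k M, and every eigenvalue α of the endomorphism induced by h on the finite-dimensional space n̄^k M / n̄^{k+1} M can be written as α = s + j, where s is an eigenvalue of the endomorphism induced by h on M/n̄ M and j is an integer with j ≤ −k. -/
/-! An `ad h`-eigenvector `x ∈ n̄` of eigenvalue `z < 0` maps `n̄^k M` into `n̄^(k+1) M`, and the
induced map `M/n̄^k M → M/n̄^(k+1) M` intertwines `h` with `h + z`; hence it carries the generalized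
`μ`-eigenspace of `h` into the generalized `(μ + z)`-eigenspace. Since `n̄^(k+1) M` is spanned by
such `⁅x, m⁆` with `m ∈ n̄^k M`, induction on `k`, starting from the finite-dimensional space
`M/n̄M`, puts the image of `n̄^k M` in `M/n̄^(k+1) M` inside the sum of the generalized eigenspaces
for the eigenvalues `s + j`, `j ≤ -k`. Generalized eigenspaces being independent, an eigenvector
lying in that sum has one of these eigenvalues. -/

set_option linter.unusedSectionVars false

noncomputable section

namespace GeomJacquet

variable (g : Type*) [LieRing g] [LieAlgebra ℂ g]

/-- The nilpotent subalgebra `n̄ ⊆ g`: the sum of the eigenspaces of `ad H` with negative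
(integer) eigenvalues. -/
def nbar (H : g) : Submodule ℂ g :=
  ⨆ z : {z : ℤ // z < 0}, Module.End.eigenspace (LieAlgebra.ad ℂ g H) ((z : ℤ) : ℂ)

/-- `ad H` is diagonalizable with all eigenvalues in `ℤ`. -/
def IsIntDiagonalizable (H : g) : Prop :=
  (⨆ z : ℤ, Module.End.eigenspace (LieAlgebra.ad ℂ g H) (z : ℂ)) = ⊤

variable (M : Type*) [AddCommGroup M] [Module ℂ M] [LieRingModule g M] [LieModule ℂ g M]

/-- The `n̄`-adic filtration `n̄^k M` on a representation `M` of `g`. -/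
def fil (H : g) : ℕ → Submodule ℂ M
  | 0 => ⊤
  | k + 1 => Submodule.span ℂ
      {m : M | ∃ x ∈ nbar g H, ∃ v ∈ fil H k, ⁅x, v⁆ = m}

/-- `M` is finitely generated as a module over `U(n̄)` (acting through the `g`-action):
there is a finite subset `S ⊆ M` such that the only `ℂ`-subspace of `M` containing `S` and
stable under the action of `n̄` is `M` itself. -/
def IsUnbarFG (H : g) : Prop :=
  ∃ S : Finset M, ∀ W : Submodule ℂ M, (↑S : Set M) ⊆ W →
    (∀ x ∈ nbar g H, ∀ m ∈ W, ⁅x, m⁆ ∈ W) → W = ⊤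

theorem lie_mem_nbar (H : g) {x : g} (hx : x ∈ nbar g H) : ⁅H, x⁆ ∈ nbar g H := by
  revert hx
  refine fun hx => Submodule.iSup_induction _ (motive := fun y => ⁅H, y⁆ ∈ nbar g H) hx ?_ ?_ ?_
  · rintro ⟨z, hz⟩ y hy
    have : ⁅H, y⁆ = ((z : ℤ) : ℂ) • y := by
      have := (Module.End.mem_eigenspace_iff).1 hy
      simpa [LieAlgebra.ad_apply] using this
    rw [this]
    exact Submodule.smul_mem _ _ (le_iSup (fun z : {z : ℤ // z < 0} =>
      Module.End.eigenspace (LieAlgebra.ad ℂ g H) ((z : ℤ) : ℂ)) ⟨z, hz⟩ hy)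
  · simp
  · intro a b ha hb
    rw [lie_add]
    exact Submodule.add_mem _ ha hb

theorem lie_H_mem_fil (H : g) (k : ℕ) : ∀ m ∈ fil g M H k, ⁅H, m⁆ ∈ fil g M H k := by
  induction k with
  | zero => intro m _; trivial
  | succ k ih =>
    intro m hm
    refine Submodule.span_induction ?_ ?_ ?_ ?_ hm
    · rintro m ⟨x, hx, v, hv, rfl⟩
      rw [leibniz_lie]
      exact Submodule.add_mem _
        (Submodule.subset_span ⟨⁅H, x⁆, lie_mem_nbar g H hx, v, hv, rfl⟩)
        (Submodule.subset_span ⟨x, hx, ⁅H, v⁆, ih v hv, rfl⟩)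
    · simp
    · intro a b _ _ ha hb; rw [lie_add]; exact Submodule.add_mem _ ha hb
    · intro c a _ ha; rw [lie_smul]; exact Submodule.smul_mem _ c ha

theorem fil_succ_le (H : g) (k : ℕ) : fil g M H (k + 1) ≤ fil g M H k := by
  induction k with
  | zero => exact le_top
  | succ k ih =>
    refine Submodule.span_le.2 ?_
    rintro m ⟨x, hx, v, hv, rfl⟩
    exact Submodule.subset_span ⟨x, hx, v, ih hv, rfl⟩

/-- The endomorphism of `M/n̄^k M` induced by (the action of) `h`. -/
def hQuot (H : g) (k : ℕ) : Module.End ℂ (M ⧸ fil g M H k) :=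
  Submodule.mapQ _ _ ((LieModule.toEnd ℂ g M) H)
    (fun m hm => by
      simpa [Submodule.mem_comap, LieModule.toEnd_apply_apply] using
        lie_H_mem_fil g M H k m hm)

/-- The canonical projection `M/n̄^(k+1) M → M/n̄^k M`. -/
def proj (H : g) (k : ℕ) : (M ⧸ fil g M H (k + 1)) →ₗ[ℂ] M ⧸ fil g M H k :=
  Submodule.mapQ _ _ LinearMap.id (fun _ hm => fil_succ_le g M H k hm)

/-- The `n̄`-adic completion `M̂ = lim_k M/n̄^k M`, realized as the space of compatible
sequences in `Π k, M/n̄^k M`. -/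
def completion (H : g) : Submodule ℂ (Π k : ℕ, M ⧸ fil g M H k) where
  carrier := {v | ∀ k, proj g M H k (v (k + 1)) = v k}
  zero_mem' := by intro k; simp
  add_mem' := by intro u v hu hv k; simp [map_add, hu k, hv k]
  smul_mem' := by intro c v hv k; simp [map_smul, hv k]

theorem proj_hQuot (H : g) (k : ℕ) (w : M ⧸ fil g M H (k + 1)) :
    proj g M H k (hQuot g M H (k + 1) w) = hQuot g M H k (proj g M H k w) := by
  obtain ⟨m, rfl⟩ := Submodule.Quotient.mk_surjective _ w
  simp [proj, hQuot, Submodule.mapQ_apply]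

/-- The endomorphism `ĥ` of the completion `M̂` induced componentwise by `h`. -/
def hhat (H : g) : Module.End ℂ (completion g M H) where
  toFun v := ⟨fun k => hQuot g M H k (v.1 k), by
    intro k; rw [proj_hQuot, v.2 k]⟩
  map_add' u v := by ext k; simp
  map_smul' c v := by ext k; simp

/-- The canonical map `M → M̂`. -/
def toCompletion (H : g) : M →ₗ[ℂ] completion g M H where
  toFun m := ⟨fun k => Submodule.Quotient.mk m, by
    intro k; simp [proj, Submodule.mapQ_apply]⟩
  map_add' u v := by ext k; simp
  map_smul' c v := by ext k; simp

/-- `E_α ⊆ M̂`: the generalized `α`-eigenspace `⋃_N ker((ĥ - α)^N)` of `ĥ`. -/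
def E (H : g) (α : ℂ) : Submodule ℂ (completion g M H) :=
  Module.End.maxGenEigenspace (hhat g M H) α

end GeomJacquet

namespace Module.End

section Intertwining

variable {R V W : Type*} [CommRing R] [AddCommGroup V] [Module R V] [AddCommGroup W] [Module R W]
  {f : End R V} {f' : End R W} {φ : V →ₗ[R] W} {c : R}

theorem map_maxGenEigenspace_le_of_comp_eq_add_smul (h : f'.comp φ = φ.comp f + c • φ) (μ : R) :
    (f.maxGenEigenspace μ).map φ ≤ f'.maxGenEigenspace (μ + c) := by
  have hshift : (f' - (μ + c) • 1).comp φ = φ.comp (f - μ • 1) := by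
    rw [LinearMap.sub_comp, h, LinearMap.comp_sub, add_smul, LinearMap.add_comp]
    ext v
    simp only [LinearMap.sub_apply, LinearMap.add_apply, LinearMap.comp_apply,
      LinearMap.smul_apply, one_apply, map_smul]
    abel
  rintro _ ⟨v, hv, rfl⟩
  obtain ⟨n, hn⟩ := (mem_maxGenEigenspace _ _ _).1 hv
  refine (mem_maxGenEigenspace _ _ _).2 ⟨n, ?_⟩
  rw [← LinearMap.comp_apply, commute_pow_left_of_commute hshift, LinearMap.comp_apply,
    hn, map_zero]

theorem map_biSup_maxGenEigenspace_le (h : f'.comp φ = φ.comp f + c • φ) {T T' : Set R}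
    (hT : ∀ ν ∈ T, ν + c ∈ T') :
    (⨆ ν ∈ T, f.maxGenEigenspace ν).map φ ≤ ⨆ ν ∈ T', f'.maxGenEigenspace ν :=
  Submodule.map_le_iff_le_comap.2 <| iSup₂_le fun ν hν => Submodule.map_le_iff_le_comap.1 <|
    (map_maxGenEigenspace_le_of_comp_eq_add_smul h ν).trans (le_biSup _ (hT ν hν))

end Intertwining

theorem mem_of_mem_eigenspace_of_mem_biSup_maxGenEigenspace {R V : Type*} [CommRing R]
    [IsDomain R] [AddCommGroup V] [Module R V] [Module.IsTorsionFree R V] {f : End R V}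
    {T : Set R} {α : R} {v : V} (hα : v ∈ f.eigenspace α)
    (hT : v ∈ ⨆ ν ∈ T, f.maxGenEigenspace ν) (hv : v ≠ 0) : α ∈ T := by
  by_contra hαT
  exact hv <| Submodule.disjoint_def.1 (f.independent_maxGenEigenspace.disjoint_biSup hαT) v
    (eigenspace_le_maxGenEigenspace hα) hT

theorem biSup_maxGenEigenspace_hasEigenvalue_eq_top {K V : Type*} [Field K] [IsAlgClosed K]
    [AddCommGroup V] [Module K V] [FiniteDimensional K V] (f : End K V) :
    ⨆ μ ∈ {μ | f.HasEigenvalue μ}, f.maxGenEigenspace μ = ⊤ := by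
  refine eq_top_iff.2 <| f.iSup_maxGenEigenspace_eq_top.ge.trans <| iSup_le fun μ => ?_
  by_cases hμ : f.maxGenEigenspace μ = ⊥
  · exact hμ ▸ bot_le
  · exact le_biSup _ (HasUnifEigenvalue.lt zero_lt_one hμ)

end Module.End

namespace GeomJacquet

variable (g : Type*) [LieRing g] [LieAlgebra ℂ g]
variable (M : Type*) [AddCommGroup M] [Module ℂ M] [LieRingModule g M] [LieModule ℂ g M]

theorem mem_nbar_of_mem_eigenspace (H : g) {z : ℤ} (hz : z < 0) {x : g}
    (hx : x ∈ (LieAlgebra.ad ℂ g H).eigenspace (z : ℂ)) : x ∈ nbar g H :=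
  le_iSup (fun z : {z : ℤ // z < 0} => (LieAlgebra.ad ℂ g H).eigenspace ((z : ℤ) : ℂ)) ⟨z, hz⟩ hx

theorem lie_mem_fil_succ (H : g) {k : ℕ} {x : g} (hx : x ∈ nbar g H) {m : M}
    (hm : m ∈ fil g M H k) : ⁅x, m⁆ ∈ fil g M H (k + 1) :=
  Submodule.subset_span ⟨x, hx, m, hm, rfl⟩

theorem finiteDimensional_quotient_fil_one (H : g) (hFG : IsUnbarFG g M H) :
    FiniteDimensional ℂ (M ⧸ fil g M H 1) := by
  classical
  obtain ⟨S, hS⟩ := hFG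
  set p := fil g M H 1
  have hcomap : (Submodule.span ℂ (p.mkQ '' S)).comap p.mkQ = ⊤ := by
    refine hS _ (fun s hs => Submodule.subset_span ⟨s, hs, rfl⟩) fun x hx m _ => ?_
    rw [Submodule.mem_comap, Submodule.mkQ_apply,
      (Submodule.Quotient.mk_eq_zero p).2 (lie_mem_fil_succ g M H hx trivial)]
    exact zero_mem _
  refine ⟨⟨S.image p.mkQ, ?_⟩⟩
  rw [Finset.coe_image, ← Submodule.map_comap_eq_of_surjective p.mkQ_surjective
    (Submodule.span ℂ _), hcomap, Submodule.map_top, Submodule.range_mkQ]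

def lieQuot (H : g) (k : ℕ) {x : g} (hx : x ∈ nbar g H) :
    (M ⧸ fil g M H k) →ₗ[ℂ] M ⧸ fil g M H (k + 1) :=
  Submodule.mapQ _ _ (LieModule.toEnd ℂ g M x) fun _ hm =>
    Submodule.mem_comap.2 (lie_mem_fil_succ g M H hx hm)

theorem hQuot_comp_lieQuot (H : g) (k : ℕ) {x : g} (hx : x ∈ nbar g H) {c : ℂ}
    (hc : ⁅H, x⁆ = c • x) :
    (hQuot g M H (k + 1)).comp (lieQuot g M H k hx) =
      (lieQuot g M H k hx).comp (hQuot g M H k) + c • lieQuot g M H k hx := by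
  ext m
  simp only [hQuot, lieQuot, LinearMap.comp_apply, LinearMap.add_apply, LinearMap.smul_apply,
    Submodule.mkQ_apply, Submodule.mapQ_apply, LieModule.toEnd_apply_apply]
  rw [leibniz_lie, hc, smul_lie, Submodule.Quotient.mk_add, Submodule.Quotient.mk_smul]
  exact add_comm _ _

def allowedEigenvalues (H : g) (k : ℕ) : Set ℂ :=
  {α | ∃ (s : ℂ) (j : ℤ), Module.End.HasEigenvalue (hQuot g M H 1) s ∧ j ≤ -(k : ℤ) ∧
    α = s + (j : ℂ)}

theorem add_mem_allowedEigenvalues_succ (H : g) {k : ℕ} {α : ℂ}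
    (hα : α ∈ allowedEigenvalues g M H k) {z : ℤ} (hz : z < 0) :
    α + z ∈ allowedEigenvalues g M H (k + 1) := by
  obtain ⟨s, j, hs, hj, rfl⟩ := hα
  exact ⟨s, j + z, hs, by omega, by push_cast; ring⟩

theorem map_fil_le_biSup_maxGenEigenspace (H : g) (hFG : IsUnbarFG g M H) (k : ℕ) :
    (fil g M H k).map (fil g M H (k + 1)).mkQ ≤
      ⨆ α ∈ allowedEigenvalues g M H k, (hQuot g M H (k + 1)).maxGenEigenspace α := by
  induction k with
  | zero =>
    have := finiteDimensional_quotient_fil_one g M H hFG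
    rw [show fil g M H 0 = ⊤ from rfl, Submodule.map_top, Submodule.range_mkQ,
      ← (hQuot g M H 1).biSup_maxGenEigenspace_hasEigenvalue_eq_top]
    exact biSup_mono fun s hs => ⟨s, 0, hs, le_rfl, by simp⟩
  | succ k ih =>
    rw [Submodule.map_le_iff_le_comap]
    refine Submodule.span_le.2 ?_
    rintro _ ⟨x, hx, v, hv, rfl⟩
    -- `n̄` is spanned by `ad H`-eigenvectors, and `x ↦ ⁅x, v⁆` is additive.
    refine Submodule.iSup_induction _ (motive := fun y => (fil g M H (k + 2)).mkQ ⁅y, v⁆ ∈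
      ⨆ α ∈ allowedEigenvalues g M H (k + 1), (hQuot g M H (k + 2)).maxGenEigenspace α) hx ?_ ?_ ?_
    · intro z y hy
      have hyn := mem_nbar_of_mem_eigenspace g H z.2 hy
      have hc : ⁅H, y⁆ = ((z : ℤ) : ℂ) • y := by
        simpa [LieAlgebra.ad_apply] using Module.End.mem_eigenspace_iff.1 hy
      exact Module.End.map_biSup_maxGenEigenspace_le (hQuot_comp_lieQuot g M H (k + 1) hyn hc)
        (fun ν hν => add_mem_allowedEigenvalues_succ g M H hν z.2) ⟨_, ih ⟨v, hv, rfl⟩, rfl⟩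
    · simp
    · intro a b ha hb
      simp only [add_lie, map_add]
      exact add_mem ha hb

theorem fil_graded_eigenvalues (H : g) (hFG : IsUnbarFG g M H) (k : ℕ) :
    (∀ m ∈ fil g M H k, ⁅H, m⁆ ∈ fil g M H k) ∧
    (∀ α : ℂ,
      (∃ v ∈ (fil g M H k).map (fil g M H (k + 1)).mkQ,
        v ≠ 0 ∧ hQuot g M H (k + 1) v = α • v) →
      ∃ (s : ℂ) (j : ℤ), Module.End.HasEigenvalue (hQuot g M H 1) s ∧
        j ≤ -(k : ℤ) ∧ α = s + (j : ℂ)) := by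
  refine ⟨lie_H_mem_fil g M H k, ?_⟩
  rintro α ⟨v, hv, hv0, hα⟩
  exact Module.End.mem_of_mem_eigenspace_of_mem_biSup_maxGenEigenspace
    (T := allowedEigenvalues g M H k) (Module.End.mem_eigenspace_iff.2 hα)
    (map_fil_le_biSup_maxGenEigenspace g M H hFG k hv) hv0

end GeomJacquet
end
end

section
/- For every α ∈ ℂ there exists K ≥ 0 such that for all k ≥ K, the canonical projection M/n̄^{k+1} M → M/n̄^k M restricts to a linear isomorphism from the generalized α-eigenspace of the endomorphism induced by h on M/n̄^{k+1} M onto the generalized α-eigenspace of the endomorphism induced by h on M/n̄^k M. -/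
set_option linter.unusedSectionVars false

noncomputable section

namespace GeomJacquet

variable (g : Type*) [LieRing g] [LieAlgebra ℂ g]

variable (M : Type*) [AddCommGroup M] [Module ℂ M] [LieRingModule g M] [LieModule ℂ g M]

/-!
Write `T` for the action of `h` on `M`. If `x ∈ n̄` is an `ad h`-eigenvector with eigenvalue
`z < 0`, then `T ⁅x, v⁆ = ⁅x, (T + z) v⁆`; hence if `p(T)` maps `n̄^k M` into `n̄^(k+1) M`, then
`∏_z p(T - z)` maps `n̄^(k+1) M` into `n̄^(k+2) M`, the product running over the finitely many
negative eigenvalues of `ad h`. Starting from the characteristic polynomial of `h` on `M/n̄M`, this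
gives polynomials killing `n̄^k M/n̄^(k+1) M` whose roots have real part at most `r - k`. Once
`r - k < Re α`, the kernel of the projection therefore meets the generalized `α`-eigenspace
trivially, while a surjective `h`-equivariant map of finite-dimensional spaces maps generalized
eigenspaces onto generalized eigenspaces.
-/

open Polynomial

section Intertwining

variable {R V W : Type*} [CommRing R] [AddCommGroup V] [Module R V] [AddCommGroup W]
  [Module R W] {f : V →ₗ[R] W} {A : Module.End R V} {B : Module.End R W}

theorem aeval_comp_of_comp_eq (h : B ∘ₗ f = f ∘ₗ A) (p : R[X]) :
    aeval B p ∘ₗ f = f ∘ₗ aeval A p := by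
  induction p using Polynomial.induction_on' with
  | add p q hp hq => rw [map_add, map_add, LinearMap.add_comp, LinearMap.comp_add, hp, hq]
  | monomial n c =>
    ext v
    simp [aeval_monomial, Module.algebraMap_end_apply,
      ← LinearMap.comp_apply (B ^ n), Module.End.commute_pow_left_of_commute h]

theorem mapsTo_maxGenEigenspace_of_comp_eq (h : B ∘ₗ f = f ∘ₗ A) (μ : R) :
    Set.MapsTo f (A.maxGenEigenspace μ) (B.maxGenEigenspace μ) := by
  intro v hv
  obtain ⟨N, hN⟩ := (Module.End.mem_maxGenEigenspace A μ v).1 hv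
  have hsub : (B - μ • 1) ∘ₗ f = f ∘ₗ (A - μ • 1) := by
    rw [LinearMap.sub_comp, LinearMap.comp_sub, h]
    ext; simp
  refine (Module.End.mem_maxGenEigenspace B μ (f v)).2 ⟨N, ?_⟩
  rw [← LinearMap.comp_apply, Module.End.commute_pow_left_of_commute hsub, LinearMap.comp_apply,
    hN, map_zero]

end Intertwining

section GeneralizedEigenspace

variable {K V W : Type*} [Field K] [AddCommGroup V] [Module K V] [AddCommGroup W]
  [Module K W]

theorem disjoint_maxGenEigenspace_ker_aeval (T : Module.End K V) {p : K[X]} {α : K}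
    (hα : ¬ p.IsRoot α) : Disjoint (T.maxGenEigenspace α) (LinearMap.ker (aeval T p)) := by
  rw [Submodule.disjoint_def]
  intro v hv hpv
  obtain ⟨N, hN⟩ := (Module.End.mem_maxGenEigenspace T α v).1 hv
  have hcop : IsCoprime ((X - C α) ^ N) p :=
    ((irreducible_X_sub_C α).coprime_iff_not_dvd.2 (mt dvd_iff_isRoot.1 hα)).pow_left
  refine Submodule.disjoint_def.1 (disjoint_ker_aeval_of_isCoprime T hcop) v ?_ hpv
  simpa [Module.algebraMap_end_eq_smul_id, Module.End.one_eq_id] using hN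

variable [IsAlgClosed K] [FiniteDimensional K V] {f : V →ₗ[K] W} {A : Module.End K V}
  {B : Module.End K W}

theorem surjOn_maxGenEigenspace_of_comp_eq (hf : Function.Surjective f)
    (h : B ∘ₗ f = f ∘ₗ A) (α : K) :
    Set.SurjOn f (A.maxGenEigenspace α) (B.maxGenEigenspace α) := by
  intro w hw
  obtain ⟨v, rfl⟩ := hf w
  have hv : v ∈ A.maxGenEigenspace α ⊔ ⨆ (μ) (_ : μ ≠ α), A.maxGenEigenspace μ := by
    rw [← iSup_split_single, Module.End.iSup_maxGenEigenspace_eq_top]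
    trivial
  obtain ⟨a, ha, b, hb, rfl⟩ := Submodule.mem_sup.1 hv
  have hfb : f b ∈ ⨆ (μ) (_ : μ ≠ α), B.maxGenEigenspace μ := by
    refine (Submodule.map_le_iff_le_comap.2 ?_ : Submodule.map f _ ≤ _) ⟨b, hb, rfl⟩
    refine iSup₂_le fun μ hμ v hv => ?_
    exact Submodule.mem_iSup_of_mem μ (Submodule.mem_iSup_of_mem hμ
      (mapsTo_maxGenEigenspace_of_comp_eq h μ hv))
  have hfb' : f b ∈ B.maxGenEigenspace α := by
    simpa using Submodule.sub_mem _ hw (mapsTo_maxGenEigenspace_of_comp_eq h α ha)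
  have hb0 : f b = 0 :=
    Submodule.disjoint_def.1 (Module.End.independent_maxGenEigenspace B α) _ hfb' hfb
  exact ⟨a, ha, by rw [map_add, hb0, add_zero]⟩

theorem bijOn_maxGenEigenspace_of_comp_eq (hf : Function.Surjective f)
    (h : B ∘ₗ f = f ∘ₗ A) {p : K[X]} (hker : LinearMap.ker f ≤ LinearMap.ker (aeval A p))
    {α : K} (hα : ¬ p.IsRoot α) :
    Set.BijOn f (A.maxGenEigenspace α) (B.maxGenEigenspace α) :=
  ⟨mapsTo_maxGenEigenspace_of_comp_eq h α,
    LinearMap.injOn_of_disjoint_ker subset_rfl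
      ((disjoint_maxGenEigenspace_ker_aeval A hα).mono_right hker),
    surjOn_maxGenEigenspace_of_comp_eq hf h α⟩

end GeneralizedEigenspace

theorem aeval_toEnd_comp_lie {R L N : Type*} [CommRing R] [LieRing L] [LieAlgebra R L]
    [AddCommGroup N] [Module R N] [LieRingModule L N] [LieModule R L N] {h x : L} {z : R}
    (hx : ⁅h, x⁆ = z • x) (p : R[X]) (v : N) :
    aeval (LieModule.toEnd R L N h) (p.comp (X - C z)) ⁅x, v⁆ =
      ⁅x, aeval (LieModule.toEnd R L N h) p v⁆ := by
  set T := LieModule.toEnd R L N h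
  have hcomm : T ∘ₗ LieModule.toEnd R L N x = LieModule.toEnd R L N x ∘ₗ (T + z • 1) := by
    ext v
    simp [T, leibniz_lie h x v, hx, add_comm]
  have hshift : aeval (T + z • 1) (X - C z) = T := by
    simp [Module.algebraMap_end_eq_smul_id, Module.End.one_eq_id]
  have := LinearMap.congr_fun (aeval_comp_of_comp_eq hcomm (p.comp (X - C z))) v
  simpa [aeval_comp, hshift] using this

theorem exists_re_le_of_isRoot {p : ℂ[X]} (hp : p ≠ 0) : ∃ r : ℝ, ∀ β, p.IsRoot β → β.re ≤ r :=
  ((finite_setOfPred_isRoot hp).image Complex.re).bddAbove.imp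
    fun _ hr β hβ => hr ⟨β, hβ, rfl⟩

theorem re_le_of_isRoot_prod_comp {p : ℂ[X]} {c : ℝ} (hp : ∀ β, p.IsRoot β → β.re ≤ c)
    {Z : Finset ℤ} (hZ : ∀ z ∈ Z, z < 0) {β : ℂ}
    (hβ : (∏ z ∈ Z, p.comp (X - C (z : ℂ))).IsRoot β) : β.re ≤ c - 1 := by
  obtain ⟨z, hzZ, hz⟩ := Finset.prod_eq_zero_iff.1 ((eval_prod ..).symm.trans hβ)
  have hroot := hp (β - z) (by simpa using hz)
  have hz1 : (z : ℝ) ≤ -1 := by exact_mod_cast Int.le_sub_one_of_lt (hZ z hzZ)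
  simp only [Complex.sub_re, Complex.intCast_re] at hroot
  linarith

def nbarBracket (H : g) (p : Submodule ℂ M) : Submodule ℂ M :=
  Submodule.map₂ (LieModule.toEnd ℂ g M : g →ₗ[ℂ] Module.End ℂ M) (nbar g H) p

theorem fil_succ_eq (H : g) (k : ℕ) : fil g M H (k + 1) = nbarBracket g M H (fil g M H k) := by
  rw [nbarBracket, Submodule.map₂_eq_span_image2, fil]
  congr 1

theorem fil_succ_eq_iSup (H : g) (k : ℕ) :
    fil g M H (k + 1) = ⨆ z : {z : ℤ // z < 0},
      Submodule.map₂ (LieModule.toEnd ℂ g M : g →ₗ[ℂ] Module.End ℂ M)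
        (Module.End.eigenspace (LieAlgebra.ad ℂ g H) ((z : ℤ) : ℂ)) (fil g M H k) := by
  rw [fil_succ_eq, nbarBracket, nbar, Submodule.map₂_iSup_left]

theorem fil_antitone (H : g) : Antitone (fil g M H) :=
  antitone_nat_of_succ_le (fil_succ_le g M H)

theorem nbarBracket_iterate_le_fil (H : g) (p : Submodule ℂ M) :
    ∀ j, (nbarBracket g M H)^[j] p ≤ fil g M H j
  | 0 => le_top
  | j + 1 => by
    rw [Function.iterate_succ_apply', fil_succ_eq]
    exact Submodule.map₂_le_map₂_right (nbarBracket_iterate_le_fil H p j)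

theorem fg_nbarBracket_iterate [FiniteDimensional ℂ g] (H : g) {p : Submodule ℂ M}
    (hp : p.FG) : ∀ j, ((nbarBracket g M H)^[j] p).FG
  | 0 => hp
  | j + 1 => by
    rw [Function.iterate_succ_apply']
    exact Submodule.FG.map₂ _ (IsNoetherian.noetherian _) (fg_nbarBracket_iterate H hp j)

theorem iSup_nbarBracket_iterate_eq_top (H : g) {S : Finset M}
    (hS : ∀ W : Submodule ℂ M, (↑S : Set M) ⊆ W →
      (∀ x ∈ nbar g H, ∀ m ∈ W, ⁅x, m⁆ ∈ W) → W = ⊤) :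
    ⨆ j, (nbarBracket g M H)^[j] (Submodule.span ℂ S) = ⊤ := by
  refine hS _ (fun s hs => Submodule.mem_iSup_of_mem 0 (Submodule.subset_span hs))
    fun x hx m hm => ?_
  have hstable : nbarBracket g M H (⨆ j, (nbarBracket g M H)^[j] (Submodule.span ℂ S)) ≤
      ⨆ j, (nbarBracket g M H)^[j] (Submodule.span ℂ S) := by
    rw [nbarBracket, Submodule.map₂_iSup_right]
    exact iSup_le fun j => le_iSup_of_le (j + 1) (Function.iterate_succ_apply' _ _ _).ge
  exact hstable (Submodule.apply_mem_map₂ _ hx hm)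

theorem finite_quotient_fil [FiniteDimensional ℂ g] (H : g) (hFG : IsUnbarFG g M H) (k : ℕ) :
    Module.Finite ℂ (M ⧸ fil g M H k) := by
  obtain ⟨S, hS⟩ := hFG
  set U := fun j => (nbarBracket g M H)^[j] (Submodule.span ℂ (S : Set M))
  have hU : fil g M H k ⊔ ⨆ j ∈ Finset.range k, U j = ⊤ := by
    refine eq_top_iff.2 ((iSup_nbarBracket_iterate_eq_top g M H hS).symm.le.trans ?_)
    refine iSup_le fun j => ?_
    rcases lt_or_ge j k with hj | hj
    · exact le_sup_of_le_right (le_biSup U (Finset.mem_range.2 hj))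
    · exact le_sup_of_le_left
        ((nbarBracket_iterate_le_fil g M H _ j).trans (fil_antitone g M H hj))
  rw [Module.finite_def, ← (Submodule.map_mkQ_eq_top _ _).2 hU]
  exact (Submodule.fg_biSup _ _ fun j _ =>
    fg_nbarBracket_iterate g M H (Submodule.fg_span S.finite_toSet) j).map _

theorem hQuot_comp_mkQ (H : g) (k : ℕ) :
    hQuot g M H k ∘ₗ (fil g M H k).mkQ = (fil g M H k).mkQ ∘ₗ LieModule.toEnd ℂ g M H :=
  Submodule.mapQ_mkQ _ _ _

theorem hQuot_comp_proj (H : g) (k : ℕ) :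
    hQuot g M H k ∘ₗ proj g M H k = proj g M H k ∘ₗ hQuot g M H (k + 1) :=
  LinearMap.ext fun w => (proj_hQuot g M H k w).symm

theorem proj_surjective (H : g) (k : ℕ) : Function.Surjective (proj g M H k) :=
  Submodule.factor_surjective (fil_succ_le g M H k)

theorem aeval_charpoly_hQuot_mem_fil (H : g) (k : ℕ) [Module.Finite ℂ (M ⧸ fil g M H k)]
    (m : M) : aeval (LieModule.toEnd ℂ g M H) (hQuot g M H k).charpoly m ∈ fil g M H k := by
  rw [← Submodule.Quotient.mk_eq_zero, ← Submodule.mkQ_apply, ← LinearMap.comp_apply,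
    ← aeval_comp_of_comp_eq (hQuot_comp_mkQ g M H k), LinearMap.comp_apply,
    LinearMap.aeval_self_charpoly, LinearMap.zero_apply]

theorem ker_proj_le_ker_aeval (H : g) {k : ℕ} {p : ℂ[X]}
    (hp : fil g M H k ≤ (fil g M H (k + 1)).comap (aeval (LieModule.toEnd ℂ g M H) p)) :
    LinearMap.ker (proj g M H k) ≤ LinearMap.ker (aeval (hQuot g M H (k + 1)) p) := by
  intro w hw
  obtain ⟨m, rfl⟩ := Submodule.mkQ_surjective _ w
  have hm : m ∈ fil g M H k := (Submodule.Quotient.mk_eq_zero _).1 hw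
  rw [LinearMap.mem_ker, ← LinearMap.comp_apply,
    aeval_comp_of_comp_eq (hQuot_comp_mkQ g M H (k + 1)), LinearMap.comp_apply,
    Submodule.mkQ_apply, Submodule.Quotient.mk_eq_zero]
  exact hp hm

theorem exists_finset_mem_iff_neg_hasEigenvalue [FiniteDimensional ℂ g] (H : g) :
    ∃ Z : Finset ℤ, ∀ z, z ∈ Z ↔ z < 0 ∧ (LieAlgebra.ad ℂ g H).HasEigenvalue (z : ℂ) := by
  have hfin := ((LieAlgebra.ad ℂ g H).finite_hasEigenvalue.preimage
    Int.cast_injective.injOn).inter_of_right {z : ℤ | z < 0}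
  exact ⟨hfin.toFinset, fun z => hfin.mem_toFinset⟩

theorem fil_succ_le_comap_aeval_prod (H : g) {k : ℕ} {p : ℂ[X]}
    (hp : fil g M H k ≤ (fil g M H (k + 1)).comap (aeval (LieModule.toEnd ℂ g M H) p))
    {Z : Finset ℤ} (hZ : ∀ z : ℤ, z < 0 → (LieAlgebra.ad ℂ g H).HasEigenvalue (z : ℂ) → z ∈ Z) :
    fil g M H (k + 1) ≤ (fil g M H (k + 2)).comap
      (aeval (LieModule.toEnd ℂ g M H) (∏ z ∈ Z, p.comp (X - C (z : ℂ)))) := by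
  rw [fil_succ_eq_iSup]
  refine iSup_le fun ⟨z, hz⟩ => Submodule.map₂_le.2 fun x hx v hv => ?_
  rcases eq_or_ne x 0 with rfl | hx0
  · simp
  obtain ⟨q, hq⟩ := Finset.dvd_prod_of_mem (fun z : ℤ => p.comp (X - C (z : ℂ)))
    (hZ z hz (Module.End.hasEigenvalue_of_hasEigenvector ⟨hx, hx0⟩))
  have hxH : ⁅H, x⁆ = (z : ℂ) • x := by
    simpa [LieAlgebra.ad_apply] using Module.End.mem_eigenspace_iff.1 hx
  change aeval (LieModule.toEnd ℂ g M H) _ ⁅x, v⁆ ∈ fil g M H (k + 2)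
  rw [hq, mul_comm, aeval_mul, Module.End.mul_apply, aeval_toEnd_comp_lie hxH]
  refine aeval_apply_smul_mem_of_le_comap ?_ q _ (lie_H_mem_fil g M H _)
  rw [fil_succ_eq]
  exact Submodule.apply_mem_map₂ _ (Submodule.mem_iSup_of_mem (⟨z, hz⟩ : {z : ℤ // z < 0}) hx)
    (hp hv)

theorem exists_re_roots_le_aeval_fil_le_fil_succ [FiniteDimensional ℂ g] (H : g)
    (hFG : IsUnbarFG g M H) :
    ∃ r : ℝ, ∀ k : ℕ, ∃ p : ℂ[X], (∀ β, p.IsRoot β → β.re ≤ r - k) ∧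
      fil g M H k ≤ (fil g M H (k + 1)).comap (aeval (LieModule.toEnd ℂ g M H) p) := by
  have := finite_quotient_fil g M H hFG 1
  obtain ⟨r, hr⟩ := exists_re_le_of_isRoot (LinearMap.charpoly_monic (hQuot g M H 1)).ne_zero
  obtain ⟨Z, hZ⟩ := exists_finset_mem_iff_neg_hasEigenvalue g H
  refine ⟨r, fun k => ?_⟩
  induction k with
  | zero => exact ⟨_, by simpa using hr, fun m _ => aeval_charpoly_hQuot_mem_fil g M H 1 m⟩
  | succ k ih =>
    obtain ⟨p, hpr, hp⟩ := ih
    refine ⟨_, fun β hβ => ?_,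
      fil_succ_le_comap_aeval_prod g M H hp fun z hz hev => (hZ z).2 ⟨hz, hev⟩⟩
    push_cast
    linarith [re_le_of_isRoot_prod_comp hpr (fun z hz => ((hZ z).1 hz).1) hβ]

theorem proj_bijOn_maxGenEigenspace
    [FiniteDimensional ℂ g] (H : g)
    (hFG : IsUnbarFG g M H) (α : ℂ) :
    ∃ K : ℕ, ∀ k : ℕ, K ≤ k →
      Set.BijOn (proj g M H k)
        (Module.End.maxGenEigenspace (hQuot g M H (k + 1)) α : Set (M ⧸ fil g M H (k + 1)))
        (Module.End.maxGenEigenspace (hQuot g M H k) α : Set (M ⧸ fil g M H k)) := by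
  obtain ⟨r, hr⟩ := exists_re_roots_le_aeval_fil_le_fil_succ g M H hFG
  refine ⟨⌈r - α.re⌉₊ + 1, fun k hk => ?_⟩
  obtain ⟨p, hroots, hp⟩ := hr k
  have := finite_quotient_fil g M H hFG (k + 1)
  refine bijOn_maxGenEigenspace_of_comp_eq (proj_surjective g M H k) (hQuot_comp_proj g M H k)
    (ker_proj_le_ker_aeval g M H hp) fun hα => ?_
  have hk' : r - α.re < k := (Nat.le_ceil _).trans_lt (by exact_mod_cast hk)
  linarith [hroots α hα]

end GeomJacquet
end
end

section
/- For every m ∈ ℝ, the subspace Σ_{α ∈ ℂ, Re α > m} E_α of M̂, i.e. the internal sum of all generalized eigenspaces of ĥ whose eigenvalue has real part greater than m, is finite-dimensional. -/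
set_option linter.unusedSectionVars false

noncomputable section

namespace GeomJacquet

variable (g : Type*) [LieRing g] [LieAlgebra ℂ g]

variable (M : Type*) [AddCommGroup M] [Module ℂ M] [LieRingModule g M] [LieModule ℂ g M]

/-! The weights of `h` on `M/n̄M` have real part at most some `c`, and bracketing with `n̄`
lowers weights by at least `1`. Hence every element of `n̄^k M` is killed modulo each `n̄^j M`
by a polynomial in `h` whose roots have real part `≤ c - k`. A generalized `α`-eigenvector of
`ĥ` with `re α > c - k` therefore vanishes as soon as its image in the finite-dimensional
`M/n̄^k M` does, so the relevant `E_α` embed into the generalized eigenspaces of `h` on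
`M/n̄^k M`: finitely many of them are nonzero, and each is finite-dimensional. -/

open Polynomial

section LinearAlgebra

variable {R V W : Type*} [CommRing R] [AddCommGroup V] [Module R V] [AddCommGroup W] [Module R W]

theorem aeval_apply_of_comp_eq (f : V →ₗ[R] W) {A : Module.End R V} {B : Module.End R W}
    (h : f ∘ₗ A = B ∘ₗ f) (p : R[X]) (v : V) : f (aeval A p v) = aeval B p (f v) := by
  induction p using Polynomial.induction_on generalizing v with
  | C a => simp
  | add p q hp hq => simp [hp, hq]
  | monomial n a ih =>
    rw [pow_succ, ← mul_assoc, map_mul (aeval A), map_mul (aeval B), aeval_X, aeval_X,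
      Module.End.mul_apply, Module.End.mul_apply, ih, ← LinearMap.comp_apply f A, h,
      LinearMap.comp_apply]

theorem map_mem_maxGenEigenspace_of_comp_eq (f : V →ₗ[R] W) {A : Module.End R V}
    {B : Module.End R W} (h : f ∘ₗ A = B ∘ₗ f) {α : R} {v : V}
    (hv : v ∈ A.maxGenEigenspace α) : f v ∈ B.maxGenEigenspace α := by
  obtain ⟨N, hN⟩ := (Module.End.mem_maxGenEigenspace _ _ _).1 hv
  refine (Module.End.mem_maxGenEigenspace _ _ _).2 ⟨N, ?_⟩
  have key := aeval_apply_of_comp_eq f h ((X - C α) ^ N) v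
  simp only [map_pow, map_sub, aeval_X, aeval_C, Algebra.algebraMap_eq_smul_one] at key
  rw [← key, hN, map_zero]

end LinearAlgebra

section Spectral

variable {V : Type*} [AddCommGroup V] [Module ℂ V]

-- In finite dimension: the sum of the generalized eigenspaces of `T` with `re ≤ r`.
def annihilatedReLE (T : Module.End ℂ V) (r : ℝ) : Submodule ℂ V where
  carrier := {v | ∃ p : ℂ[X], p.Monic ∧ (∀ β ∈ p.roots, β.re ≤ r) ∧ aeval T p v = 0}
  zero_mem' := ⟨1, monic_one, by simp, map_zero _⟩
  add_mem' := by
    rintro v w ⟨p, hp, hpr, hpv⟩ ⟨q, hq, hqr, hqw⟩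
    refine ⟨p * q, hp.mul hq, fun β hβ => ?_, ?_⟩
    · rw [roots_mul (hp.mul hq).ne_zero, Multiset.mem_add] at hβ
      exact hβ.elim (hpr β) (hqr β)
    · have hv : aeval T (p * q) v = 0 := by
        rw [mul_comm, map_mul, Module.End.mul_apply, hpv, map_zero]
      have hw : aeval T (p * q) w = 0 := by
        rw [map_mul, Module.End.mul_apply, hqw, map_zero]
      rw [map_add, hv, hw, add_zero]
  smul_mem' := by
    rintro c v ⟨p, hp, hpr, hpv⟩
    exact ⟨p, hp, hpr, by rw [map_smul, hpv, smul_zero]⟩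

theorem mem_annihilatedReLE {T : Module.End ℂ V} {r : ℝ} {v : V} :
    v ∈ annihilatedReLE T r ↔
      ∃ p : ℂ[X], p.Monic ∧ (∀ β ∈ p.roots, β.re ≤ r) ∧ aeval T p v = 0 :=
  Iff.rfl

theorem annihilatedReLE_mono (T : Module.End ℂ V) {r r' : ℝ} (h : r ≤ r') :
    annihilatedReLE T r ≤ annihilatedReLE T r' := by
  rintro v ⟨p, hp, hpr, hpv⟩
  exact ⟨p, hp, fun β hβ => (hpr β hβ).trans h, hpv⟩

theorem disjoint_maxGenEigenspace_annihilatedReLE (T : Module.End ℂ V) {α : ℂ} {r : ℝ}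
    (hr : r < α.re) : Disjoint (T.maxGenEigenspace α) (annihilatedReLE T r) := by
  rw [Submodule.disjoint_def]
  rintro v hv ⟨p, hp, hpr, hpv⟩
  obtain ⟨N, hN⟩ := (Module.End.mem_maxGenEigenspace _ _ _).1 hv
  have hα : ¬ (X - C α ∣ p) := by
    rw [dvd_iff_isRoot, ← mem_roots hp.ne_zero]
    exact fun h => (hpr α h).not_gt hr
  have hcop : IsCoprime ((X - C α) ^ N) p :=
    ((irreducible_X_sub_C α).coprime_iff_not_dvd.2 hα).pow_left
  refine Submodule.disjoint_def.1 (disjoint_ker_aeval_of_isCoprime T hcop) v ?_ hpv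
  simpa [Algebra.algebraMap_eq_smul_one] using hN

theorem exists_annihilatedReLE_eq_top [FiniteDimensional ℂ V] (T : Module.End ℂ V) :
    ∃ r : ℝ, annihilatedReLE T r = ⊤ := by
  obtain ⟨r, hr⟩ := (T.charpoly.roots.map Complex.re).toFinset.bddAbove
  refine ⟨r, eq_top_iff.2 fun v _ => ⟨T.charpoly, T.charpoly_monic, fun β hβ => hr ?_, ?_⟩⟩
  · exact Multiset.mem_toFinset.2 (Multiset.mem_map_of_mem _ hβ)
  · rw [T.aeval_self_charpoly, LinearMap.zero_apply]

end Spectral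

theorem finiteDimensional_biSup_of_finite {K V ι : Type*} [DivisionRing K] [AddCommGroup V]
    [Module K V] {N : ι → Submodule K V} {s : Set ι} (hs : {i ∈ s | N i ≠ ⊥}.Finite)
    (hN : ∀ i ∈ s, FiniteDimensional K (N i)) :
    FiniteDimensional K (⨆ i ∈ s, N i : Submodule K V) := by
  have hle : (⨆ i ∈ s, N i : Submodule K V) ≤ ⨆ i ∈ hs.toFinset, N i := by
    refine iSup₂_le fun i hi => ?_
    by_cases hi' : N i = ⊥
    · simp [hi']
    · exact le_iSup₂ (f := fun i (_ : i ∈ hs.toFinset) => N i) i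
        (hs.mem_toFinset.2 ⟨hi, hi'⟩)
  have : FiniteDimensional K (⨆ i ∈ hs.toFinset, N i : Submodule K V) :=
    (Submodule.fg_iff_finiteDimensional _).1 <| Submodule.fg_biSup _ _ fun i hi =>
      (Submodule.fg_iff_finiteDimensional _).2 (hN i (hs.mem_toFinset.1 hi).1)
  exact Submodule.finiteDimensional_of_le hle

-- The elements of `M` whose `h`-weights modulo `n̄^j M` have real part `≤ r`.
def reLEModFil (H : g) (r : ℝ) (j : ℕ) : Submodule ℂ M :=
  (annihilatedReLE (hQuot g M H j) r).comap (fil g M H j).mkQ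

def completionToQuot (H : g) (k : ℕ) : completion g M H →ₗ[ℂ] M ⧸ fil g M H k :=
  (LinearMap.proj k).comp (completion g M H).subtype

variable {g M}

theorem fil_succ_eq_map₂ (H : g) (k : ℕ) :
    fil g M H (k + 1) = Submodule.map₂ (LieModule.toEnd ℂ g M : g →ₗ[ℂ] Module.End ℂ M)
      (nbar g H) (fil g M H k) := by
  rw [Submodule.map₂_eq_span_image2]
  rfl

theorem exists_fg_sup_fil_succ_eq_top [FiniteDimensional ℂ g] {H : g} (hFG : IsUnbarFG g M H)
    (k : ℕ) : ∃ V : Submodule ℂ M, V.FG ∧ V ⊔ fil g M H (k + 1) = ⊤ := by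
  induction k with
  | zero =>
    obtain ⟨S, hS⟩ := hFG
    refine ⟨Submodule.span ℂ S, Submodule.fg_span S.finite_toSet,
      hS _ (fun s hs => Submodule.mem_sup_left (Submodule.subset_span hs)) fun x hx m _ => ?_⟩
    exact Submodule.mem_sup_right (Submodule.subset_span ⟨x, hx, m, trivial, rfl⟩)
  | succ k ih =>
    obtain ⟨V, hVfg, hV⟩ := ih
    set B := (LieModule.toEnd ℂ g M : g →ₗ[ℂ] Module.End ℂ M)
    have hnbar : (nbar g H).FG := IsNoetherian.noetherian _
    refine ⟨V ⊔ Submodule.map₂ B (nbar g H) V, hVfg.sup (hnbar.map₂ B hVfg), ?_⟩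
    have hfil : fil g M H (k + 1) ≤ Submodule.map₂ B (nbar g H) V ⊔ fil g M H (k + 2) := calc
      fil g M H (k + 1) ≤ Submodule.map₂ B (nbar g H) (V ⊔ fil g M H (k + 1)) := by
        rw [hV, fil_succ_eq_map₂]
        exact Submodule.map₂_le_map₂_right le_top
      _ = Submodule.map₂ B (nbar g H) V ⊔ fil g M H (k + 2) := by
        rw [Submodule.map₂_sup_right, fil_succ_eq_map₂ (M := M) H (k + 1)]
    rw [eq_top_iff, ← hV, sup_assoc]
    exact sup_le_sup_left hfil V

theorem finiteDimensional_quotient_fil [FiniteDimensional ℂ g] {H : g} (hFG : IsUnbarFG g M H)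
    (k : ℕ) : FiniteDimensional ℂ (M ⧸ fil g M H k) := by
  obtain ⟨V, hVfg, hV⟩ := exists_fg_sup_fil_succ_eq_top hFG k
  have hmap : V.map (fil g M H k).mkQ = ⊤ := by
    rw [Submodule.map_mkQ_eq_top, sup_comm, eq_top_iff, ← hV]
    exact sup_le_sup_left (fil_succ_le g M H k) V
  exact Module.finite_def.2 (hmap ▸ hVfg.map _)

theorem mk_aeval (H : g) (j : ℕ) (p : ℂ[X]) (m : M) :
    (Submodule.Quotient.mk (aeval (LieModule.toEnd ℂ g M H) p m) : M ⧸ fil g M H j) =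
      aeval (hQuot g M H j) p (Submodule.Quotient.mk m) :=
  aeval_apply_of_comp_eq _ (Submodule.mapQ_mkQ _ _ _).symm p m

theorem mem_reLEModFil {H : g} {r : ℝ} {j : ℕ} {m : M} :
    m ∈ reLEModFil g M H r j ↔ ∃ p : ℂ[X], p.Monic ∧ (∀ β ∈ p.roots, β.re ≤ r) ∧
      aeval (LieModule.toEnd ℂ g M H) p m ∈ fil g M H j := by
  simp only [reLEModFil, Submodule.mem_comap, mem_annihilatedReLE, Submodule.mkQ_apply,
    ← mk_aeval, Submodule.Quotient.mk_eq_zero]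

theorem reLEModFil_mono (H : g) {r r' : ℝ} (h : r ≤ r') (j : ℕ) :
    reLEModFil g M H r j ≤ reLEModFil g M H r' j :=
  Submodule.comap_mono (annihilatedReLE_mono _ h)

theorem mem_reLEModFil_of_aeval_mem {H : g} {r : ℝ} {j : ℕ} {p : ℂ[X]} (hp : p.Monic)
    (hpr : ∀ β ∈ p.roots, β.re ≤ r) {m : M}
    (hm : aeval (LieModule.toEnd ℂ g M H) p m ∈ reLEModFil g M H r j) :
    m ∈ reLEModFil g M H r j := by
  obtain ⟨q, hq, hqr, hqm⟩ := mem_reLEModFil.1 hm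
  refine mem_reLEModFil.2 ⟨q * p, hq.mul hp, fun β hβ => ?_, by rwa [map_mul]⟩
  rw [roots_mul (hq.mul hp).ne_zero, Multiset.mem_add] at hβ
  exact hβ.elim (hqr β) (hpr β)

theorem lie_mem_reLEModFil {H x : g} (hx : x ∈ nbar g H) {z : ℂ} (hxz : ⁅H, x⁆ = z • x)
    {r : ℝ} {j : ℕ} {v : M} (hv : v ∈ reLEModFil g M H r j) :
    ⁅x, v⁆ ∈ reLEModFil g M H (r + z.re) (j + 1) := by
  obtain ⟨p, hp, hpr, hpv⟩ := mem_reLEModFil.1 hv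
  set D := LieModule.toEnd ℂ g M H
  refine mem_reLEModFil.2 ⟨p.comp (X - C z), hp.comp_X_sub_C z, fun β hβ => ?_, ?_⟩
  · have hroot : β - z ∈ p.roots := by
      rw [mem_roots (hp.comp_X_sub_C z).ne_zero] at hβ
      simpa [mem_roots hp.ne_zero, eval_comp] using hβ
    have := hpr _ hroot
    rw [Complex.sub_re] at this
    linarith
  · have hcomm : LieModule.toEnd ℂ g M x ∘ₗ D =
        (D - algebraMap ℂ _ z) ∘ₗ LieModule.toEnd ℂ g M x := by
      ext m
      simp [D, leibniz_lie H x m, hxz]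
    have key := aeval_apply_of_comp_eq _ hcomm p v
    rw [LieModule.toEnd_apply_apply, LieModule.toEnd_apply_apply] at key
    rw [aeval_comp, show aeval D (X - C z) = D - algebraMap ℂ _ z by simp, ← key]
    exact Submodule.subset_span ⟨x, hx, _, hpv, rfl⟩

theorem fil_le_reLEModFil_succ {H : g} {c : ℝ} (hc : annihilatedReLE (hQuot g M H 1) c = ⊤)
    (j : ℕ) : fil g M H j ≤ reLEModFil g M H (c - j) (j + 1) := by
  induction j with
  | zero =>
    rw [reLEModFil, zero_add, Nat.cast_zero, sub_zero, hc, Submodule.comap_top]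
    exact le_top
  | succ j ih =>
    refine Submodule.span_le.2 ?_
    rintro _ ⟨x, hx, v, hv, rfl⟩
    refine Submodule.iSup_induction _ (motive := fun x =>
      ⁅x, v⁆ ∈ reLEModFil g M H (c - (j + 1 : ℕ)) (j + 1 + 1)) hx ?_ (by simp) ?_
    · rintro ⟨z, hz⟩ x hxz
      have hHx : ⁅H, x⁆ = (z : ℂ) • x := by
        simpa using Module.End.mem_eigenspace_iff.1 hxz
      refine reLEModFil_mono H ?_ _ (lie_mem_reLEModFil
        (Submodule.mem_iSup_of_mem (⟨z, hz⟩ : {z : ℤ // z < 0}) hxz) hHx (ih hv))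
      have : (z : ℂ).re ≤ -1 := by
        rw [Complex.intCast_re]
        exact_mod_cast Int.le_sub_one_of_lt hz
      push_cast
      linarith
    · intro a b ha hb
      rw [add_lie]
      exact add_mem ha hb

theorem fil_le_reLEModFil {H : g} {c : ℝ} (hc : annihilatedReLE (hQuot g M H 1) c = ⊤)
    {k j : ℕ} (hkj : k ≤ j) : fil g M H k ≤ reLEModFil g M H (c - k) j := by
  induction j, hkj using Nat.le_induction with
  | base => exact fun m hm => mem_reLEModFil.2 ⟨1, monic_one, by simp, by simpa using hm⟩
  | succ j hkj ih =>
    intro m hm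
    obtain ⟨p, hp, hpr, hpm⟩ := mem_reLEModFil.1 (ih hm)
    refine mem_reLEModFil_of_aeval_mem hp hpr (reLEModFil_mono H ?_ _
      (fil_le_reLEModFil_succ hc j hpm))
    exact sub_le_sub_left (Nat.cast_le.2 hkj) c

theorem completionToQuot_mem_maxGenEigenspace {H : g} {α : ℂ} {v : completion g M H}
    (hv : v ∈ E g M H α) (k : ℕ) :
    completionToQuot g M H k v ∈ (hQuot g M H k).maxGenEigenspace α :=
  map_mem_maxGenEigenspace_of_comp_eq (completionToQuot g M H k) (A := hhat g M H) rfl hv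

theorem completion_apply_eq_mk {H : g} (v : completion g M H) {j k : ℕ} (hjk : j ≤ k) {m : M}
    (hm : v.1 k = Submodule.Quotient.mk m) : v.1 j = Submodule.Quotient.mk m := by
  induction k, hjk using Nat.le_induction with
  | base => exact hm
  | succ k _ ih => exact ih (by rw [← v.2 k, hm]; rfl)

theorem eq_zero_of_mem_E_of_completionToQuot_eq_zero {H : g} {c : ℝ}
    (hc : annihilatedReLE (hQuot g M H 1) c = ⊤) {k : ℕ} {α : ℂ} (hα : c - k < α.re)
    {v : completion g M H} (hv : v ∈ E g M H α) (hvk : completionToQuot g M H k v = 0) :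
    v = 0 := by
  refine Subtype.ext (funext fun j => ?_)
  obtain ⟨m, hm⟩ := Submodule.Quotient.mk_surjective _ (v.1 (max j k))
  have hmk : m ∈ fil g M H k := by
    rw [← Submodule.Quotient.mk_eq_zero, ← completion_apply_eq_mk v (le_max_right j k) hm.symm]
    exact hvk
  have hm0 : (Submodule.Quotient.mk m : M ⧸ fil g M H (max j k)) = 0 :=
    Submodule.disjoint_def.1 (disjoint_maxGenEigenspace_annihilatedReLE _ hα) _
      (hm ▸ completionToQuot_mem_maxGenEigenspace hv _)
      (fil_le_reLEModFil hc (le_max_right j k) hmk)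
  have hvjk : v.1 (max j k) = Submodule.Quotient.mk 0 := by
    rw [← hm, hm0, Submodule.Quotient.mk_zero]
  rw [completion_apply_eq_mk v (le_max_left j k) hvjk, Submodule.Quotient.mk_zero]
  rfl

theorem sum_maxGenEigenspaces_re_gt_finiteDimensional_general
    [FiniteDimensional ℂ g] (H : g) (hFG : IsUnbarFG g M H) (m : ℝ) :
    FiniteDimensional ℂ (⨆ α ∈ {α : ℂ | m < α.re}, E g M H α : Submodule ℂ (completion g M H)) := by
  have := finiteDimensional_quotient_fil hFG 1
  obtain ⟨c, hc⟩ := exists_annihilatedReLE_eq_top (hQuot g M H 1)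
  obtain ⟨k, hk⟩ := exists_nat_gt (c - m)
  have := finiteDimensional_quotient_fil hFG k
  have hker {α : ℂ} (hα : m < α.re) {v : completion g M H} (hv : v ∈ E g M H α) :
      completionToQuot g M H k v = 0 → v = 0 :=
    eq_zero_of_mem_E_of_completionToQuot_eq_zero hc (by linarith) hv
  refine finiteDimensional_biSup_of_finite ?_ fun α hα => ?_
  · refine (Submodule.finite_ne_bot_of_iSupIndep
      (Module.End.independent_maxGenEigenspace (hQuot g M H k))).subset ?_
    rintro α ⟨hα, hE⟩
    obtain ⟨v, hv, hv0⟩ := Submodule.exists_mem_ne_zero_of_ne_bot hE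
    exact Submodule.ne_bot_iff _ |>.2
      ⟨_, completionToQuot_mem_maxGenEigenspace hv k, mt (hker hα hv) hv0⟩
  · exact .of_injective ((completionToQuot g M H k).domRestrict _)
      ((injective_iff_map_eq_zero _).2 fun v hv => Subtype.ext (hker hα v.2 hv))

/-- For every `m ∈ ℝ`, the internal sum of all generalized eigenspaces of `ĥ` whose
eigenvalue has real part greater than `m` is a finite-dimensional subspace of `M̂`. -/
theorem sum_maxGenEigenspaces_re_gt_finiteDimensional
    [FiniteDimensional ℂ g] (H : g) (hdiag : IsIntDiagonalizable g H)
    (hFG : IsUnbarFG g M H) (m : ℝ) :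
    FiniteDimensional ℂ (⨆ α ∈ {α : ℂ | m < α.re}, E g M H α : Submodule ℂ (completion g M H)) :=
  sum_maxGenEigenspaces_re_gt_finiteDimensional_general H hFG m

end GeomJacquet
end
end
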